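/- For any CGS G, state q, BSL state formula φ, assignment χ for φ, set of agents A ⊆ Ag, and agents a_{i_1},…,a_{i_k} ∈ A: G, χ, q ⊨_SL tr_A(φ) if and only if G, χ[a_{i_1}↦?,…,a_{i_k}↦?], q ⊨_SL tr_A(φ), where χ[a↦?] removes a from the domain of χ. -/

import Mathlib

/-- A concurrent game structure: transition function, initial state, valuation. -/
structure CGS (S Ag Act AP : Type) where
  δ : S → (Ag → Act) → S
  init : S
  val : S → AP → Prop

variable {S Ag Act AP Var : Type}

/-- An initial (finite) path: a start state together with the list of decisions taken. -/
abbrev FPath (S Ag Act : Type) := S × List (Ag → Act)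

/-- Last state of an initial path. -/
def CGS.lastState (G : CGS S Ag Act AP) (ρ : FPath S Ag Act) : S :=
  ρ.2.foldl G.δ ρ.1

/-- A strategy assigns an action to every initial path. -/
abbrev Strat (S Ag Act : Type) := FPath S Ag Act → Act

/-- Concatenation of initial paths (meaningful when `G.lastState ρ = ρ'.1`,
i.e. they are glued at the shared state). -/
def FPath.concat (ρ ρ' : FPath S Ag Act) : FPath S Ag Act := (ρ.1, ρ.2 ++ ρ'.2)

/-- The finite prefix with `n` decisions of the play from `q` whose decision stream is `d`. -/
def prefixPath (q : S) (d : ℕ → Ag → Act) (n : ℕ) : FPath S Ag Act :=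
  (q, List.ofFn fun i : Fin n => d i)

/-- The state reached after `i` steps of the play from `q` with decision stream `d`. -/
def stateAt (G : CGS S Ag Act AP) (q : S) (d : ℕ → Ag → Act) (i : ℕ) : S :=
  G.lastState (prefixPath q d i)

/-- An assignment: a partial map from agents and variables to strategies. -/
abbrev Assign (S Ag Act Var : Type) := Ag ⊕ Var → Option (Strat S Ag Act)

/-- The outcome of an assignment from a state: the set of plays (identified with
their decision streams) compatible with all strategies assigned to agents. -/
def outcome (G : CGS S Ag Act AP) (q : S) (χ : Assign S Ag Act Var) :
    Set (ℕ → Ag → Act) :=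
  {d | ∀ (k : ℕ) (a : Ag) (σ : Strat S Ag Act),
      χ (Sum.inl a) = some σ → d k a = σ (prefixPath q d k)}

/-- The `ρ`-translation of a strategy. -/
def transStrat [DecidableEq S] (G : CGS S Ag Act AP) (ρ : FPath S Ag Act)
    (σ : Strat S Ag Act) : Strat S Ag Act :=
  fun ρ' => if ρ'.1 = G.lastState ρ then σ (ρ.concat ρ') else σ ρ'

/-- The `ρ`-translation of an assignment. -/
def transAssign [DecidableEq S] (G : CGS S Ag Act AP) (ρ : FPath S Ag Act)
    (χ : Assign S Ag Act Var) : Assign S Ag Act Var :=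
  fun l => (χ l).map (transStrat G ρ)

/-- Syntax of Strategy Logic (SL). -/
inductive SLForm (AP Ag Var : Type) : Type where
  | atom : AP → SLForm AP Ag Var
  | neg  : SLForm AP Ag Var → SLForm AP Ag Var
  | or   : SLForm AP Ag Var → SLForm AP Ag Var → SLForm AP Ag Var
  | next : SLForm AP Ag Var → SLForm AP Ag Var
  | untl : SLForm AP Ag Var → SLForm AP Ag Var → SLForm AP Ag Var
  | exi  : Var → SLForm AP Ag Var → SLForm AP Ag Var
  | bind : Ag → Var → SLForm AP Ag Var → SLForm AP Ag Var

mutual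
/-- State formulas of Branching-time Strategy Logic (BSL). -/
inductive BSLForm (AP Ag Var : Type) : Type where
  | atom : AP → BSLForm AP Ag Var
  | neg  : BSLForm AP Ag Var → BSLForm AP Ag Var
  | or   : BSLForm AP Ag Var → BSLForm AP Ag Var → BSLForm AP Ag Var
  | exi  : Var → BSLForm AP Ag Var → BSLForm AP Ag Var
  | bind : Ag → Var → BSLForm AP Ag Var → BSLForm AP Ag Var
  | unbind : Ag → BSLForm AP Ag Var → BSLForm AP Ag Var
  | pathE : BSLPath AP Ag Var → BSLForm AP Ag Var
/-- Path formulas of BSL. -/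
inductive BSLPath (AP Ag Var : Type) : Type where
  | state : BSLForm AP Ag Var → BSLPath AP Ag Var
  | neg   : BSLPath AP Ag Var → BSLPath AP Ag Var
  | or    : BSLPath AP Ag Var → BSLPath AP Ag Var → BSLPath AP Ag Var
  | next  : BSLPath AP Ag Var → BSLPath AP Ag Var
  | untl  : BSLPath AP Ag Var → BSLPath AP Ag Var → BSLPath AP Ag Var
end

/-- Semantics of SL. Temporal operators are evaluated on an outcome play of the
current assignment (for complete assignments — the only case where the SL
semantics is defined — this play is unique), with the assignment translated
along the play. -/
def SLsat [DecidableEq S] [DecidableEq Ag] [DecidableEq Var] (G : CGS S Ag Act AP) :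
    Assign S Ag Act Var → S → SLForm AP Ag Var → Prop
  | χ, q, .atom p => G.val q p
  | χ, q, .neg φ => ¬ SLsat G χ q φ
  | χ, q, .or φ φ' => SLsat G χ q φ ∨ SLsat G χ q φ'
  | χ, q, .exi x φ =>
      ∃ σ : Strat S Ag Act, SLsat G (Function.update χ (Sum.inr x) (some σ)) q φ
  | χ, q, .bind a x φ => SLsat G (Function.update χ (Sum.inl a) (χ (Sum.inr x))) q φ
  | χ, q, .next φ => ∃ d ∈ outcome G q χ,
      SLsat G (transAssign G (prefixPath q d 1) χ) (stateAt G q d 1) φ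
  | χ, q, .untl φ φ' => ∃ d ∈ outcome G q χ, ∃ j : ℕ,
      SLsat G (transAssign G (prefixPath q d j) χ) (stateAt G q d j) φ' ∧
      ∀ k < j, SLsat G (transAssign G (prefixPath q d k) χ) (stateAt G q d k) φ

mutual
/-- Semantics of BSL state formulas, at a state under an assignment. -/
def BSLsat [DecidableEq S] [DecidableEq Ag] [DecidableEq Var] (G : CGS S Ag Act AP)
    (χ : Assign S Ag Act Var) (q : S) : BSLForm AP Ag Var → Prop
  | .atom p => G.val q p
  | .neg φ => ¬ BSLsat G χ q φ
  | .or φ φ' => BSLsat G χ q φ ∨ BSLsat G χ q φ'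
  | .exi x φ =>
      ∃ σ : Strat S Ag Act, BSLsat G (Function.update χ (Sum.inr x) (some σ)) q φ
  | .bind a x φ => BSLsat G (Function.update χ (Sum.inl a) (χ (Sum.inr x))) q φ
  | .unbind a φ => BSLsat G (Function.update χ (Sum.inl a) none) q φ
  | .pathE ψ => ∃ d ∈ outcome G q χ, BSLsatP G χ q d 0 ψ

/-- Semantics of BSL path formulas, on the play from `q` with decision stream
`d`, at position `i`; the assignment is translated by the prefix as state
formulas are evaluated. -/
def BSLsatP [DecidableEq S] [DecidableEq Ag] [DecidableEq Var] (G : CGS S Ag Act AP)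
    (χ : Assign S Ag Act Var) (q : S) (d : ℕ → Ag → Act) (i : ℕ) :
    BSLPath AP Ag Var → Prop
  | .state φ => BSLsat G (transAssign G (prefixPath q d i) χ) (stateAt G q d i) φ
  | .neg ψ => ¬ BSLsatP G χ q d i ψ
  | .or ψ ψ' => BSLsatP G χ q d i ψ ∨ BSLsatP G χ q d i ψ'
  | .next ψ => BSLsatP G χ q d (i + 1) ψ
  | .untl ψ ψ' => ∃ j, i ≤ j ∧ BSLsatP G χ q d j ψ' ∧
      ∀ k, i ≤ k → k < j → BSLsatP G χ q d k ψ
end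

/-- Free variables of an SL formula. -/
def SLfree : SLForm AP Ag Var → Set Var
  | .atom _ => ∅
  | .neg φ => SLfree φ
  | .or φ φ' => SLfree φ ∪ SLfree φ'
  | .next φ => SLfree φ
  | .untl φ φ' => SLfree φ ∪ SLfree φ'
  | .exi x φ => SLfree φ \ {x}
  | .bind _ x φ => insert x (SLfree φ)

mutual
/-- Free variables of a BSL state formula. -/
def BSLfree : BSLForm AP Ag Var → Set Var
  | .atom _ => ∅
  | .neg φ => BSLfree φ
  | .or φ φ' => BSLfree φ ∪ BSLfree φ'
  | .exi x φ => BSLfree φ \ {x}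
  | .bind _ x φ => insert x (BSLfree φ)
  | .unbind _ φ => BSLfree φ
  | .pathE ψ => BSLfreeP ψ
/-- Free variables of a BSL path formula. -/
def BSLfreeP : BSLPath AP Ag Var → Set Var
  | .state φ => BSLfree φ
  | .neg ψ => BSLfreeP ψ
  | .or ψ ψ' => BSLfreeP ψ ∪ BSLfreeP ψ'
  | .next ψ => BSLfreeP ψ
  | .untl ψ ψ' => BSLfreeP ψ ∪ BSLfreeP ψ'
end

/-- `SLdefFor A φ` holds when the SL semantics of `φ` is defined in every
assignment whose agent-domain is `A`: every temporal operator is only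
evaluated under a complete assignment (every agent being bound on the way). -/
def SLdefFor (A : Set Ag) : SLForm AP Ag Var → Prop
  | .atom _ => True
  | .neg φ => SLdefFor A φ
  | .or φ φ' => SLdefFor A φ ∧ SLdefFor A φ'
  | .exi _ φ => SLdefFor A φ
  | .bind a _ φ => SLdefFor (insert a A) φ
  | .next φ => A = Set.univ ∧ SLdefFor A φ
  | .untl φ φ' => A = Set.univ ∧ SLdefFor A φ ∧ SLdefFor A φ'

/-- The translation `tr : SL → BSL`, inserting a path quantifier in front of
each temporal operator and homomorphic elsewhere. -/
def tr : SLForm AP Ag Var → BSLForm AP Ag Var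
  | .atom p => .atom p
  | .neg φ => .neg (tr φ)
  | .or φ φ' => .or (tr φ) (tr φ')
  | .next φ => .pathE (.next (.state (tr φ)))
  | .untl φ φ' => .pathE (.untl (.state (tr φ)) (.state (tr φ')))
  | .exi x φ => .exi x (tr φ)
  | .bind a x φ => .bind a x (tr φ)

mutual
/-- `φ` avoids the fresh variables (those of the form `Sum.inr a`) used by the
translation `tr_A`. -/
def BSLavoidsFresh : BSLForm AP Ag (Var ⊕ Ag) → Prop
  | .atom _ => True
  | .neg φ => BSLavoidsFresh φ
  | .or φ φ' => BSLavoidsFresh φ ∧ BSLavoidsFresh φ'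
  | .exi x φ => x.isLeft ∧ BSLavoidsFresh φ
  | .bind _ x φ => x.isLeft ∧ BSLavoidsFresh φ
  | .unbind _ φ => BSLavoidsFresh φ
  | .pathE ψ => BSLavoidsFreshP ψ
def BSLavoidsFreshP : BSLPath AP Ag (Var ⊕ Ag) → Prop
  | .state φ => BSLavoidsFresh φ
  | .neg ψ => BSLavoidsFreshP ψ
  | .or ψ ψ' => BSLavoidsFreshP ψ ∧ BSLavoidsFreshP ψ'
  | .next ψ => BSLavoidsFreshP ψ
  | .untl ψ ψ' => BSLavoidsFreshP ψ ∧ BSLavoidsFreshP ψ'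
end

/-- Prefix a formula with the bindings `(a, x_a)` for all agents `a` in `l`. -/
def bindList (l : List Ag) (φ : SLForm AP Ag (Var ⊕ Ag)) : SLForm AP Ag (Var ⊕ Ag) :=
  l.foldr (fun a ψ => .bind a (Sum.inr a) ψ) φ

/-- Prefix a formula with the strategy quantifications `⟨⟨x_a⟩⟩` for `a ∈ l`. -/
def quantList (l : List Ag) (φ : SLForm AP Ag (Var ⊕ Ag)) : SLForm AP Ag (Var ⊕ Ag) :=
  l.foldr (fun a ψ => .exi (Sum.inr a) ψ) φ

noncomputable section

mutual
/-- The translation `tr_A : BSL → SL`, parameterized by the set `A` of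
currently unbound agents; each fresh variable for agent `a` is `Sum.inr a`. -/
def trA [DecidableEq Ag] (A : Finset Ag) :
    BSLForm AP Ag (Var ⊕ Ag) → SLForm AP Ag (Var ⊕ Ag)
  | .atom p => .atom p
  | .neg φ => .neg (trA A φ)
  | .or φ φ' => .or (trA A φ) (trA A φ')
  | .exi x φ => .exi x (trA A φ)
  | .bind a x φ => .bind a x (trA (A.erase a) φ)
  | .unbind a φ => trA (insert a A) φ
  | .pathE ψ => quantList A.toList (bindList A.toList (trAP A ψ))
/-- The homomorphic extension of `tr_A` to BSL path formulas. -/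
def trAP [DecidableEq Ag] (A : Finset Ag) :
    BSLPath AP Ag (Var ⊕ Ag) → SLForm AP Ag (Var ⊕ Ag)
  | .state φ => trA A φ
  | .neg ψ => .neg (trAP A ψ)
  | .or ψ ψ' => .or (trAP A ψ) (trAP A ψ')
  | .next ψ => .next (trAP A ψ)
  | .untl ψ ψ' => .untl (trAP A ψ) (trAP A ψ')
end
end

/-- Remove the listed agents from the domain of an assignment. -/
def removes [DecidableEq Ag] [DecidableEq V] (χ : Assign S Ag Act V) :
    List Ag → Assign S Ag Act V
  | [] => χ
  | a :: l => Function.update (removes χ l) (Sum.inl a) none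

/-! `tr_A(φ)` only ever reads the strategies of agents outside `A`: an agent of `A` is
either rebound by some `(a, x)` before it is read, or it is still unbound when a path
quantifier is met, and then the prefix `(a, x_a)` introduced by the translation rebinds
it before any temporal operator is evaluated. -/

section AgreeOff

def AgreeOff (B : Set Ag) (χ χ' : Assign S Ag Act Var) : Prop :=
  ∀ s, (∀ a ∈ B, s ≠ Sum.inl a) → χ s = χ' s

theorem agreeOff_empty {χ χ' : Assign S Ag Act Var} : AgreeOff ∅ χ χ' ↔ χ = χ' := by
  simp [AgreeOff, funext_iff]

theorem AgreeOff.mono {B C : Set Ag} {χ χ' : Assign S Ag Act Var} (h : AgreeOff B χ χ')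
    (hBC : B ⊆ C) : AgreeOff C χ χ' :=
  fun s hs => h s fun a ha => hs a (hBC ha)

theorem AgreeOff.apply_inr {B : Set Ag} {χ χ' : Assign S Ag Act Var} (h : AgreeOff B χ χ')
    (x : Var) : χ (Sum.inr x) = χ' (Sum.inr x) :=
  h _ fun _ _ => Sum.inr_ne_inl

variable [DecidableEq Ag] [DecidableEq Var]

theorem AgreeOff.update {B : Set Ag} {χ χ' : Assign S Ag Act Var} (h : AgreeOff B χ χ')
    (s : Ag ⊕ Var) (v : Option (Strat S Ag Act)) :
    AgreeOff B (Function.update χ s v) (Function.update χ' s v) := by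
  intro t ht
  by_cases hts : t = s
  · simp [hts]
  · simp [hts, h t ht]

theorem AgreeOff.update_inl {B : Set Ag} {χ χ' : Assign S Ag Act Var} (h : AgreeOff B χ χ')
    (a : Ag) {v v' : Option (Strat S Ag Act)} (hv : v = v') :
    AgreeOff (B \ {a}) (Function.update χ (Sum.inl a) v) (Function.update χ' (Sum.inl a) v') := by
  intro t ht
  by_cases hta : t = Sum.inl a
  · simp [hta, hv]
  · have hoff : ∀ b ∈ B, t ≠ Sum.inl b := fun b hb => by
      by_cases hba : b = a
      · exact hba ▸ hta
      · exact ht b ⟨hb, hba⟩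
    simp [hta, h t hoff]

theorem removes_apply_of_forall_ne (χ : Assign S Ag Act Var) {l : List Ag} {s : Ag ⊕ Var}
    (hs : ∀ a ∈ l, s ≠ Sum.inl a) : removes χ l s = χ s := by
  induction l with
  | nil => rfl
  | cons a l ih =>
    rw [removes, Function.update_of_ne (hs a List.mem_cons_self)]
    exact ih fun b hb => hs b (List.mem_cons_of_mem a hb)

theorem agreeOff_removes (χ : Assign S Ag Act Var) (l : List Ag) :
    AgreeOff {a | a ∈ l} χ (removes χ l) :=
  fun _ hs => (removes_apply_of_forall_ne χ hs).symm

end AgreeOff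

section Congr

variable [DecidableEq S] [DecidableEq Ag] [DecidableEq Var] (G : CGS S Ag Act AP) (q : S)

theorem SLsat_bindList_congr (F : SLForm AP Ag (Var ⊕ Ag)) (l : List Ag) {B : Set Ag}
    (hB : ∀ a ∈ B, a ∈ l) {χ χ' : Assign S Ag Act (Var ⊕ Ag)} (h : AgreeOff B χ χ') :
    SLsat G χ q (bindList l F) ↔ SLsat G χ' q (bindList l F) := by
  induction l generalizing B χ χ' with
  | nil =>
    have hB : B = ∅ := Set.eq_empty_of_forall_notMem fun a ha => by simpa using hB a ha
    subst hB
    rw [agreeOff_empty.1 h]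
  | cons a l ih =>
    exact ih (fun b hb => (List.mem_cons.1 (hB b hb.1)).resolve_left hb.2)
      (h.update_inl a (h.apply_inr (Sum.inr a)))

theorem SLsat_quantList_congr (F : SLForm AP Ag (Var ⊕ Ag)) (l : List Ag) {B : Set Ag}
    (hF : ∀ χ χ' : Assign S Ag Act (Var ⊕ Ag), AgreeOff B χ χ' →
      (SLsat G χ q F ↔ SLsat G χ' q F))
    {χ χ' : Assign S Ag Act (Var ⊕ Ag)} (h : AgreeOff B χ χ') :
    SLsat G χ q (quantList l F) ↔ SLsat G χ' q (quantList l F) := by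
  induction l generalizing χ χ' with
  | nil => exact hF χ χ' h
  | cons a l ih => exact exists_congr fun σ => ih (h.update _ _)

theorem SLsat_trA_congr :
    ∀ (φ : BSLForm AP Ag (Var ⊕ Ag)) (A : Finset Ag) {χ χ' : Assign S Ag Act (Var ⊕ Ag)},
      AgreeOff ↑A χ χ' → (SLsat G χ q (trA A φ) ↔ SLsat G χ' q (trA A φ))
  | .atom _, _, _, _, _ => Iff.rfl
  | .neg φ, A, χ, χ', h => not_congr (SLsat_trA_congr φ A h)
  | .or φ φ', A, χ, χ', h => or_congr (SLsat_trA_congr φ A h) (SLsat_trA_congr φ' A h)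
  | .exi x φ, A, χ, χ', h => exists_congr fun σ => SLsat_trA_congr φ A (h.update _ _)
  | .bind a x φ, A, χ, χ', h => by
    refine SLsat_trA_congr φ (A.erase a) ?_
    rw [Finset.coe_erase]
    exact h.update_inl a (h.apply_inr _)
  | .unbind a φ, A, χ, χ', h => by
    refine SLsat_trA_congr φ (insert a A) (h.mono ?_)
    simp
  | .pathE ψ, A, χ, χ', h =>
    SLsat_quantList_congr G q _ _
      (fun _ _ => SLsat_bindList_congr G q _ _ fun a ha => Finset.mem_toList.2 ha) h

end Congr

/-- the truth value of `tr_A(φ)` is unaffected by unbinding any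
agents of `A`. -/
theorem statement_6 [DecidableEq S] [DecidableEq Ag] [DecidableEq Var]
    (G : CGS S Ag Act AP) (q : S) (A : Finset Ag)
    (φ : BSLForm AP Ag (Var ⊕ Ag)) (havoid : BSLavoidsFresh φ)
    (χ : Assign S Ag Act (Var ⊕ Ag))
    (hfor : ∀ x ∈ BSLfree φ, (χ (Sum.inr x)).isSome)
    (l : List Ag) (hl : ∀ a ∈ l, a ∈ A) :
    SLsat G χ q (trA A φ) ↔ SLsat G (removes χ l) q (trA A φ) :=
  SLsat_trA_congr G q φ A ((agreeOff_removes χ l).mono hl)
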